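/- Let A and B be finite non-collinear subsets of ℝ², and let v be a unit vector that is not parallel to any side of [A] or of [B]. Suppose A_{v,low} = ∅. Then i_{A+B} ≥ |B_{v,upp}| − 2; moreover, if i_{A+B} = |B_{v,upp}| − 2, then B_{v,low} is contained in the closed segment [l_{v,B}, r_{v,B}], and the vector r_{v,A} − l_{v,A} is parallel to the vector r_{v,B} − l_{v,B}. -/

import Mathlib

open scoped Pointwise Classical RealInnerProductSpace

noncomputable section

/-- The plane `ℝ²`. -/
abbrev Pt : Type := EuclideanSpace ℝ (Fin 2)

/-- `b_A`: the number of points of `A` on the frontier of the convex hull of `A`. -/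
def bdryCard (A : Finset Pt) : ℕ :=
  (A.filter fun x => x ∈ frontier (convexHull ℝ (A : Set Pt))).card

/-- `i_A`: the number of points of `A` in the interior of the convex hull of `A`. -/
def intCard (A : Finset Pt) : ℕ :=
  (A.filter fun x => x ∈ interior (convexHull ℝ (A : Set Pt))).card

/-- `u` is an exterior normal to the convex hull of `A` at `x`,
i.e. `u·x = max {u·y : y ∈ A}` (for `x ∈ A`). -/
def IsExtNormal (A : Finset Pt) (u x : Pt) : Prop :=
  ∀ y ∈ A, ⟪u, y⟫ ≤ ⟪u, x⟫

/-- `A_u`: the set of points of `A` where `u·x` is maximal. -/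
def maxSet (A : Finset Pt) (u : Pt) : Finset Pt :=
  A.filter fun x => ∀ y ∈ A, ⟪u, y⟫ ≤ ⟪u, x⟫

/-- `C` is an arithmetic progression with difference `d`. -/
def IsAP (C : Finset Pt) (d : Pt) : Prop :=
  ∃ c : Pt, C = (Finset.range C.card).image fun k => c + (k : ℝ) • d

/-- `A_{v,upp}`: points of `A` having a nonzero exterior normal, all of whose
unit exterior normals `u` satisfy `u·v > 0`. -/
def upperSet (A : Finset Pt) (v : Pt) : Finset Pt :=
  A.filter fun a => (∃ u : Pt, u ≠ 0 ∧ IsExtNormal A u a) ∧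
    ∀ u : Pt, ‖u‖ = 1 → IsExtNormal A u a → 0 < ⟪u, v⟫

/-- `A_{v,low}`: points of `A` having a nonzero exterior normal, all of whose
unit exterior normals `u` satisfy `u·v < 0`. -/
def lowerSet (A : Finset Pt) (v : Pt) : Finset Pt :=
  A.filter fun a => (∃ u : Pt, u ≠ 0 ∧ IsExtNormal A u a) ∧
    ∀ u : Pt, ‖u‖ = 1 → IsExtNormal A u a → ⟪u, v⟫ < 0

/-- The unit vector `v` is not parallel to any side of the convex hull of `A`. -/
def NotParallelToSide (v : Pt) (A : Finset Pt) : Prop :=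
  ∀ u : Pt, ‖u‖ = 1 → ⟪u, v⟫ = 0 → (maxSet A u).card ≤ 1

/-- For `v = (v₁, v₂)`, the rotated vector `w = (v₂, -v₁)`. -/
def perp (v : Pt) : Pt := (EuclideanSpace.equiv (Fin 2) ℝ).symm ![v 1, -(v 0)]

/-- `r_{v,A}`: a point of `A` where `(perp v)·x` is maximal (the rightmost point of `A`);
it is unique when `v` is not parallel to any side of the convex hull of `A`. -/
def rPt (v : Pt) (A : Finset Pt) : Pt :=
  if h : ∃ x ∈ A, ∀ y ∈ A, ⟪perp v, y⟫ ≤ ⟪perp v, x⟫ then h.choose else 0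

/-- `l_{v,A}`: a point of `A` where `(perp v)·x` is minimal (the leftmost point of `A`);
it is unique when `v` is not parallel to any side of the convex hull of `A`. -/
def lPt (v : Pt) (A : Finset Pt) : Pt :=
  if h : ∃ x ∈ A, ∀ y ∈ A, ⟪perp v, x⟫ ≤ ⟪perp v, y⟫ then h.choose else 0

/-!
Work in the frame in which `perp v` points right and `v` points up. A vector `x` pointing right
has a slope `dirSlope v x`, an exterior normal `u` with `⟪u, v⟫ ≠ 0` has the slope
`supportSlope v u` of its supporting lines, and the sign of `⟪u, x⟫` is decided by comparing the
two, so that the whole argument is a series of comparisons of real numbers.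

As `A` has no lower points, `[A]` lies above its bottom edge `d = r_{v,A} - l_{v,A}`: upper normals
at `l_{v,A}` are steeper than `d`, upper normals at `r_{v,A}` less steep. Let `U = B_{v,upp}` and
let `L`, `R` be the `b ∈ U` for which `l_{v,A} + b`, resp. `r_{v,A} + b`, lies on the boundary of
`[A + B]`. The points `l_{v,A} + b` (`b ∈ U \ L`) and `r_{v,A} + b` (`b ∈ L \ R`) are interior, and
comparing slopes shows `|L ∩ R| ≤ 1` and that the two families share at most one point; hence
`i_{A+B} ≥ |U| - 2`. At equality these are all the interior points, and both a point of `L ∩ R`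
and a shared point exist. This forces lower common normals at `(l_{v,A}, r_{v,B})` and at
`(r_{v,A}, l_{v,B})`, whose slopes squeeze those of `d` and of `r_{v,B} - l_{v,B}` together.
Finally, for a lower point `x` of `B`, either `l_{v,A}` and `x` share a normal, or
`l_{v,A} + x` is interior and so `x - d ∈ B`; either way a slope comparison puts `x` on the line
through `l_{v,B}` and `r_{v,B}`.
-/

section Frame

variable {v : Pt}

@[simp] lemma perp_apply_zero (v : Pt) : perp v 0 = v 1 := rfl

@[simp] lemma perp_apply_one (v : Pt) : perp v 1 = -v 0 := rfl

lemma inner_eq_coords (x y : Pt) : ⟪x, y⟫ = x 0 * y 0 + x 1 * y 1 := by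
  simp [PiLp.inner_apply, Fin.sum_univ_two, mul_comm]

lemma inner_perp_self (v : Pt) : ⟪perp v, v⟫ = 0 := by
  rw [inner_eq_coords, perp_apply_zero, perp_apply_one]; ring

lemma norm_perp (v : Pt) : ‖perp v‖ = ‖v‖ := by
  rw [← sq_eq_sq₀ (norm_nonneg _) (norm_nonneg _), ← real_inner_self_eq_norm_sq,
    ← real_inner_self_eq_norm_sq, inner_eq_coords, inner_eq_coords, perp_apply_zero,
    perp_apply_one]
  ring

lemma perp_ne_zero (hv : ‖v‖ = 1) : perp v ≠ 0 := by
  rw [← norm_ne_zero_iff, norm_perp, hv]; exact one_ne_zero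

lemma eq_inner_smul_add_inner_perp_smul (hv : ‖v‖ = 1) (x : Pt) :
    x = ⟪v, x⟫ • v + ⟪perp v, x⟫ • perp v := by
  have h : v 0 ^ 2 + v 1 ^ 2 = 1 := by
    have := real_inner_self_eq_norm_sq v
    rw [hv, inner_eq_coords] at this; linear_combination this
  ext i
  fin_cases i <;>
    simp only [PiLp.add_apply, PiLp.smul_apply, smul_eq_mul, inner_eq_coords, perp_apply_zero,
      perp_apply_one, Fin.zero_eta, Fin.mk_one] <;>
    linear_combination (-x _) * h

lemma inner_eq_mul_add_mul (hv : ‖v‖ = 1) (u x : Pt) :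
    ⟪u, x⟫ = ⟪u, v⟫ * ⟪v, x⟫ + ⟪u, perp v⟫ * ⟪perp v, x⟫ := by
  conv_lhs => rw [eq_inner_smul_add_inner_perp_smul hv x]
  simp only [inner_add_right, real_inner_smul_right]; ring

lemma eq_inner_perp_smul_perp_of_inner_eq_zero (hv : ‖v‖ = 1) {x : Pt} (h : ⟪v, x⟫ = 0) :
    x = ⟪perp v, x⟫ • perp v := by
  conv_lhs => rw [eq_inner_smul_add_inner_perp_smul hv x]
  rw [h, zero_smul, zero_add]

lemma eq_inner_smul_of_inner_perp_eq_zero (hv : ‖v‖ = 1) {x : Pt} (h : ⟪perp v, x⟫ = 0) :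
    x = ⟪v, x⟫ • v := by
  conv_lhs => rw [eq_inner_smul_add_inner_perp_smul hv x]
  rw [h, zero_smul, add_zero]

end Frame

/-- The slope of the vector `x` in the frame where `perp v` points right and `v` points up. -/
def dirSlope (v x : Pt) : ℝ := ⟪v, x⟫ / ⟪perp v, x⟫

/-- The slope, in the same frame, of the lines orthogonal to `u`. -/
def supportSlope (v u : Pt) : ℝ := -⟪u, perp v⟫ / ⟪u, v⟫

section Slopes

variable {v u x : Pt}

@[simp] lemma dirSlope_neg (v x : Pt) : dirSlope v (-x) = dirSlope v x := by
  simp [dirSlope, neg_div_neg_eq]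

@[simp] lemma supportSlope_neg (v u : Pt) : supportSlope v (-u) = supportSlope v u := by
  simp [supportSlope, div_neg, neg_div]

lemma inner_eq_mul_dirSlope_sub (hv : ‖v‖ = 1) (hu : ⟪u, v⟫ ≠ 0) (hx : ⟪perp v, x⟫ ≠ 0) :
    ⟪u, x⟫ = ⟪u, v⟫ * ⟪perp v, x⟫ * (dirSlope v x - supportSlope v u) := by
  rw [inner_eq_mul_add_mul hv, dirSlope, supportSlope]
  field_simp
  ring

lemma inner_nonpos_iff_dirSlope_le (hv : ‖v‖ = 1) (hu : 0 < ⟪u, v⟫) (hx : 0 < ⟪perp v, x⟫) :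
    ⟪u, x⟫ ≤ 0 ↔ dirSlope v x ≤ supportSlope v u := by
  rw [inner_eq_mul_dirSlope_sub hv hu.ne' hx.ne', ← neg_nonneg, ← mul_neg,
    mul_nonneg_iff_of_pos_left (mul_pos hu hx), neg_nonneg, sub_nonpos]

lemma inner_nonneg_iff_supportSlope_le (hv : ‖v‖ = 1) (hu : 0 < ⟪u, v⟫) (hx : 0 < ⟪perp v, x⟫) :
    0 ≤ ⟪u, x⟫ ↔ supportSlope v u ≤ dirSlope v x := by
  rw [inner_eq_mul_dirSlope_sub hv hu.ne' hx.ne', mul_nonneg_iff_of_pos_left (mul_pos hu hx),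
    sub_nonneg]

lemma inner_nonpos_iff_supportSlope_le_of_neg (hv : ‖v‖ = 1) (hu : ⟪u, v⟫ < 0)
    (hx : 0 < ⟪perp v, x⟫) : ⟪u, x⟫ ≤ 0 ↔ supportSlope v u ≤ dirSlope v x := by
  rw [← supportSlope_neg, ← inner_nonneg_iff_supportSlope_le hv (by simpa using hu) hx,
    inner_neg_left, neg_nonneg]

lemma inner_nonneg_iff_dirSlope_le_of_neg (hv : ‖v‖ = 1) (hu : ⟪u, v⟫ < 0)
    (hx : 0 < ⟪perp v, x⟫) : 0 ≤ ⟪u, x⟫ ↔ dirSlope v x ≤ supportSlope v u := by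
  rw [← supportSlope_neg, ← inner_nonpos_iff_dirSlope_le hv (by simpa using hu) hx,
    inner_neg_left, neg_nonpos]

lemma inner_eq_zero_iff_dirSlope_eq (hv : ‖v‖ = 1) (hu : ⟪u, v⟫ ≠ 0) (hx : ⟪perp v, x⟫ ≠ 0) :
    ⟪u, x⟫ = 0 ↔ dirSlope v x = supportSlope v u := by
  rw [inner_eq_mul_dirSlope_sub hv hu hx, mul_eq_zero_iff_left (mul_ne_zero hu hx), sub_eq_zero]

lemma supportSlope_le_supportSlope (hv : ‖v‖ = 1) {μ ν e : Pt} (hμ : 0 < ⟪μ, v⟫)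
    (hν : 0 < ⟪ν, v⟫) (he : 0 < ⟪perp v, e⟫) (hμe : 0 ≤ ⟪μ, e⟫) (hνe : ⟪ν, e⟫ ≤ 0) :
    supportSlope v μ ≤ supportSlope v ν :=
  ((inner_nonneg_iff_supportSlope_le hv hμ he).1 hμe).trans
    ((inner_nonpos_iff_dirSlope_le hv hν he).1 hνe)

lemma eq_smul_of_dirSlope_eq (hv : ‖v‖ = 1) {y : Pt} (hx : ⟪perp v, x⟫ ≠ 0)
    (hy : ⟪perp v, y⟫ ≠ 0) (h : dirSlope v x = dirSlope v y) :
    x = (⟪perp v, x⟫ / ⟪perp v, y⟫) • y := by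
  rw [dirSlope, dirSlope, div_eq_div_iff hx hy] at h
  calc x = ⟪v, x⟫ • v + ⟪perp v, x⟫ • perp v := eq_inner_smul_add_inner_perp_smul hv x
    _ = (⟪perp v, x⟫ / ⟪perp v, y⟫) • (⟪v, y⟫ • v + ⟪perp v, y⟫ • perp v) := by
      rw [smul_add, smul_smul, smul_smul]
      congr 2 <;> field_simp
      linear_combination h
    _ = _ := by rw [← eq_inner_smul_add_inner_perp_smul hv y]

end Slopes

section Normals

variable {X : Finset Pt} {u u' a y : Pt}

lemma IsExtNormal.inner_sub_nonpos (h : IsExtNormal X u a) (hy : y ∈ X) : ⟪u, y - a⟫ ≤ 0 := by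
  rw [inner_sub_right, sub_nonpos]; exact h y hy

lemma IsExtNormal.inner_sub_nonneg (h : IsExtNormal X u a) (hy : y ∈ X) : 0 ≤ ⟪u, a - y⟫ := by
  rw [inner_sub_right, sub_nonneg]; exact h y hy

lemma IsExtNormal.smul (h : IsExtNormal X u a) {c : ℝ} (hc : 0 ≤ c) : IsExtNormal X (c • u) a :=
  fun y hy => by
    simp only [real_inner_smul_left]; exact mul_le_mul_of_nonneg_left (h y hy) hc

lemma IsExtNormal.add (h : IsExtNormal X u a) (h' : IsExtNormal X u' a) :
    IsExtNormal X (u + u') a :=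
  fun y hy => by simp only [inner_add_left]; exact add_le_add (h y hy) (h' y hy)

lemma isExtNormal_smul_iff {c : ℝ} (hc : 0 < c) : IsExtNormal X (c • u) a ↔ IsExtNormal X u a :=
  ⟨fun h => by simpa [smul_smul, inv_mul_cancel₀ hc.ne'] using h.smul (inv_nonneg.2 hc.le),
    fun h => h.smul hc.le⟩

end Normals

lemma collinear_of_inner_eq {E : Type*} [NormedAddCommGroup E] [InnerProductSpace ℝ E]
    [Fact (Module.finrank ℝ E = 2)] {s : Set E} {u : E} (hu : u ≠ 0) {c : ℝ}
    (h : ∀ y ∈ s, ⟪u, y⟫ = c) : Collinear ℝ s := by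
  have : FiniteDimensional ℝ E := .of_fact_finrank_eq_succ 1
  have hspan : vectorSpan ℝ s ≤ (ℝ ∙ u)ᗮ := by
    rw [vectorSpan_def, Submodule.span_le]
    rintro _ ⟨x, hx, y, hy, rfl⟩
    simp [Submodule.mem_orthogonal_singleton_iff_inner_right, inner_sub_right, h x hx, h y hy]
  rw [collinear_iff_finrank_le_one]
  exact (Submodule.finrank_mono hspan).trans
    (Submodule.finrank_orthogonal_span_singleton (n := 1) hu).le

instance : Fact (Module.finrank ℝ Pt = 2) := ⟨finrank_euclideanSpace_fin⟩

lemma eq_zero_of_isExtNormal_of_isExtNormal_neg {X : Finset Pt}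
    (hX : ¬ Collinear ℝ (X : Set Pt)) {u a : Pt} (h : IsExtNormal X u a)
    (h' : IsExtNormal X (-u) a) : u = 0 := by
  by_contra hu
  refine hX (collinear_of_inner_eq hu (c := ⟪u, a⟫) fun y hy => le_antisymm (h y hy) ?_)
  simpa using h' y hy

lemma exists_forall_inner_le_of_notMem_interior {E : Type*} [NormedAddCommGroup E]
    [InnerProductSpace ℝ E] [CompleteSpace E] {K : Set E} (hK : Convex ℝ K)
    (hint : (interior K).Nonempty) {z : E} (hz : z ∉ interior K) :
    ∃ u : E, ‖u‖ = 1 ∧ ∀ y ∈ K, ⟪u, y⟫ ≤ ⟪u, z⟫ := by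
  obtain ⟨f, hf⟩ := geometric_hahn_banach_open_point hK.interior isOpen_interior hz
  set u := (InnerProductSpace.toDual ℝ E).symm f
  have hu : ∀ y, ⟪u, y⟫ = f y := fun y => InnerProductSpace.toDual_symm_apply
  have hle : ∀ y ∈ K, f y ≤ f z := by
    have hcl : closure (interior K) ⊆ {y | f y ≤ f z} :=
      closure_minimal (fun y hy => (hf y hy).le) (isClosed_le f.continuous continuous_const)
    rw [hK.closure_interior_eq_closure_of_nonempty_interior hint] at hcl
    exact fun y hy => hcl (subset_closure hy)
  have hu0 : u ≠ 0 := by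
    obtain ⟨x, hx⟩ := hint
    rintro h
    have := hf x hx
    rw [← hu, ← hu, h, inner_zero_left, inner_zero_left] at this
    exact lt_irrefl _ this
  refine ⟨‖u‖⁻¹ • u, norm_smul_inv_norm hu0, fun y hy => ?_⟩
  simp only [real_inner_smul_left, hu]
  exact mul_le_mul_of_nonneg_left (hle y hy) (by positivity)

lemma interior_convexHull_nonempty_of_not_collinear {E : Type*} [NormedAddCommGroup E]
    [NormedSpace ℝ E] [Fact (Module.finrank ℝ E = 2)] {s : Set E} (hs : ¬ Collinear ℝ s) :
    (interior (convexHull ℝ s)).Nonempty := by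
  have : FiniteDimensional ℝ E := .of_fact_finrank_eq_succ 1
  have hne : s.Nonempty := Set.nonempty_iff_ne_empty.2 fun h => hs (h ▸ collinear_empty ℝ E)
  rw [interior_convexHull_nonempty_iff_affineSpan_eq_top,
    AffineSubspace.affineSpan_eq_top_iff_vectorSpan_eq_top_of_nonempty ℝ E E hne]
  rw [collinear_iff_finrank_le_one] at hs
  refine Submodule.eq_top_of_finrank_eq (le_antisymm (Submodule.finrank_le _) ?_)
  rw [(Fact.out : Module.finrank ℝ E = 2)]
  omega

lemma nonempty_of_not_collinear {X : Finset Pt} (hX : ¬ Collinear ℝ (X : Set Pt)) : X.Nonempty :=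
  Finset.nonempty_iff_ne_empty.2 fun h => hX (by simp [h, collinear_empty])

lemma interior_convexHull_add_nonempty {A B : Finset Pt} (hA : ¬ Collinear ℝ (A : Set Pt))
    (hB : B.Nonempty) : (interior (convexHull ℝ ((A + B : Finset Pt) : Set Pt))).Nonempty := by
  rw [Finset.coe_add, convexHull_add]
  exact ((interior_convexHull_nonempty_of_not_collinear hA).add
    (hB.to_set.convexHull)).mono subset_interior_add_left

/-- `a + b` is a boundary point of `[A + B]` exactly when `a` and `b` share an exterior normal. -/
def HasCommonNormal (A B : Finset Pt) (a b : Pt) : Prop :=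
  ∃ u : Pt, ‖u‖ = 1 ∧ IsExtNormal A u a ∧ IsExtNormal B u b

lemma hasCommonNormal_of_add_notMem_interior {A B : Finset Pt} {a b : Pt}
    (hint : (interior (convexHull ℝ ((A + B : Finset Pt) : Set Pt))).Nonempty)
    (ha : a ∈ A) (hb : b ∈ B) (h : a + b ∉ interior (convexHull ℝ ((A + B : Finset Pt) : Set Pt))) :
    HasCommonNormal A B a b := by
  obtain ⟨u, hu, hmax⟩ := exists_forall_inner_le_of_notMem_interior (convex_convexHull ℝ _) hint h
  have hmax' : ∀ a' ∈ A, ∀ b' ∈ B, ⟪u, a'⟫ + ⟪u, b'⟫ ≤ ⟪u, a⟫ + ⟪u, b⟫ := fun a' ha' b' hb' => by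
    simpa only [inner_add_right] using
      hmax _ (subset_convexHull ℝ _ (Finset.mem_coe.2 (Finset.add_mem_add ha' hb')))
  exact ⟨u, hu, fun y hy => by linarith [hmax' y hy b hb],
    fun y hy => by linarith [hmax' a ha y hy]⟩

def interiorPts (X : Finset Pt) : Finset Pt :=
  X.filter fun x => x ∈ interior (convexHull ℝ (X : Set Pt))

lemma intCard_eq_card_interiorPts (X : Finset Pt) : intCard X = (interiorPts X).card := rfl

lemma image_add_subset_interiorPts {A B s t : Finset Pt} {a : Pt}
    (hint : (interior (convexHull ℝ ((A + B : Finset Pt) : Set Pt))).Nonempty) (ha : a ∈ A)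
    (hs : s ⊆ B) (ht : ∀ b ∈ s, HasCommonNormal A B a b → b ∈ t) :
    (s \ t).image (a + ·) ⊆ interiorPts (A + B) := by
  intro z hz
  obtain ⟨b, hb, rfl⟩ := Finset.mem_image.1 hz
  obtain ⟨hbs, hbt⟩ := Finset.mem_sdiff.1 hb
  refine Finset.mem_filter.2 ⟨Finset.add_mem_add ha (hs hbs), ?_⟩
  by_contra hi
  exact hbt (ht b hbs (hasCommonNormal_of_add_notMem_interior hint ha (hs hbs) hi))

section Extremes

variable {X : Finset Pt} {v x : Pt}

lemma rPt_mem (hX : X.Nonempty) : rPt v X ∈ X := by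
  have h := X.exists_max_image (fun y => ⟪perp v, y⟫) hX
  rw [rPt, dif_pos h]; exact h.choose_spec.1

lemma isExtNormal_perp_rPt (hX : X.Nonempty) : IsExtNormal X (perp v) (rPt v X) := by
  have h := X.exists_max_image (fun y => ⟪perp v, y⟫) hX
  rw [rPt, dif_pos h]; exact h.choose_spec.2

lemma lPt_mem (hX : X.Nonempty) : lPt v X ∈ X := by
  have h := X.exists_min_image (fun y => ⟪perp v, y⟫) hX
  rw [lPt, dif_pos h]; exact h.choose_spec.1

lemma isExtNormal_neg_perp_lPt (hX : X.Nonempty) : IsExtNormal X (-perp v) (lPt v X) := by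
  have h := X.exists_min_image (fun y => ⟪perp v, y⟫) hX
  rw [lPt, dif_pos h]
  exact fun y hy => by simpa only [inner_neg_left, neg_le_neg_iff] using h.choose_spec.2 y hy

lemma eq_rPt_of_isExtNormal (hv : ‖v‖ = 1) (hvX : NotParallelToSide v X) (hX : X.Nonempty)
    (hx : x ∈ X) (h : IsExtNormal X (perp v) x) : x = rPt v X :=
  Finset.card_le_one.1 (hvX _ (by rw [norm_perp, hv]) (inner_perp_self v)) _
    (Finset.mem_filter.2 ⟨hx, h⟩) _ (Finset.mem_filter.2 ⟨rPt_mem hX, isExtNormal_perp_rPt hX⟩)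

lemma eq_lPt_of_isExtNormal (hv : ‖v‖ = 1) (hvX : NotParallelToSide v X) (hX : X.Nonempty)
    (hx : x ∈ X) (h : IsExtNormal X (-perp v) x) : x = lPt v X :=
  Finset.card_le_one.1 (hvX _ (by rw [norm_neg, norm_perp, hv]) (by simp [inner_perp_self])) _
    (Finset.mem_filter.2 ⟨hx, h⟩) _
    (Finset.mem_filter.2 ⟨lPt_mem hX, isExtNormal_neg_perp_lPt hX⟩)

lemma inner_perp_rPt_sub_lPt_pos (hv : ‖v‖ = 1) (hX : ¬ Collinear ℝ (X : Set Pt)) :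
    0 < ⟪perp v, rPt v X - lPt v X⟫ := by
  have hne := nonempty_of_not_collinear hX
  rw [inner_sub_right, sub_pos]
  by_contra hle
  refine hX (collinear_of_inner_eq (perp_ne_zero hv) (c := ⟪perp v, rPt v X⟫) fun y hy => ?_)
  have hl := isExtNormal_neg_perp_lPt (v := v) hne y hy
  simp only [inner_neg_left, neg_le_neg_iff] at hl
  linarith [isExtNormal_perp_rPt (v := v) hne y hy]

lemma inner_perp_mem_Ioo (hv : ‖v‖ = 1) (hX : X.Nonempty) (hx : x ∈ X)
    (h : ∀ u : Pt, ‖u‖ = 1 → IsExtNormal X u x → ⟪u, v⟫ ≠ 0) :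
    ⟪perp v, x⟫ ∈ Set.Ioo ⟪perp v, lPt v X⟫ ⟪perp v, rPt v X⟫ := by
  have hw : ‖perp v‖ = 1 := by rw [norm_perp, hv]
  constructor
  · refine lt_of_le_of_ne (by simpa using isExtNormal_neg_perp_lPt (v := v) hX x hx) fun he => ?_
    refine h _ (by rw [norm_neg, hw]) (fun y hy => ?_) (by simp [inner_perp_self])
    simpa [← he] using isExtNormal_neg_perp_lPt (v := v) hX y hy
  · refine lt_of_le_of_ne (isExtNormal_perp_rPt hX x hx) fun he => ?_
    exact h _ hw (fun y hy => he ▸ isExtNormal_perp_rPt hX y hy) (inner_perp_self v)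

end Extremes

section UpperAndLowerPoints

variable {X : Finset Pt} {v b c u : Pt}

lemma mem_of_mem_upperSet (hb : b ∈ upperSet X v) : b ∈ X := (Finset.mem_filter.1 hb).1

lemma mem_of_mem_lowerSet (hb : b ∈ lowerSet X v) : b ∈ X := (Finset.mem_filter.1 hb).1

lemma inner_pos_of_mem_upperSet (hb : b ∈ upperSet X v) (hu : ‖u‖ = 1)
    (h : IsExtNormal X u b) : 0 < ⟪u, v⟫ :=
  (Finset.mem_filter.1 hb).2.2 u hu h

lemma inner_neg_of_mem_lowerSet (hb : b ∈ lowerSet X v) (hu : ‖u‖ = 1)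
    (h : IsExtNormal X u b) : ⟪u, v⟫ < 0 :=
  (Finset.mem_filter.1 hb).2.2 u hu h

lemma exists_unit_isExtNormal {a : Pt} (h : ∃ u : Pt, u ≠ 0 ∧ IsExtNormal X u a) :
    ∃ u : Pt, ‖u‖ = 1 ∧ IsExtNormal X u a := by
  obtain ⟨u, hu, hn⟩ := h
  exact ⟨‖u‖⁻¹ • u, norm_smul_inv_norm hu, hn.smul (by positivity)⟩

lemma exists_isExtNormal_of_mem_upperSet (hb : b ∈ upperSet X v) :
    ∃ u : Pt, 0 < ⟪u, v⟫ ∧ IsExtNormal X u b := by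
  obtain ⟨u, hu, hn⟩ := exists_unit_isExtNormal (Finset.mem_filter.1 hb).2.1
  exact ⟨u, inner_pos_of_mem_upperSet hb hu hn, hn⟩

lemma exists_isExtNormal_of_mem_lowerSet (hb : b ∈ lowerSet X v) :
    ∃ u : Pt, ⟪u, v⟫ < 0 ∧ IsExtNormal X u b := by
  obtain ⟨u, hu, hn⟩ := exists_unit_isExtNormal (Finset.mem_filter.1 hb).2.1
  exact ⟨u, inner_neg_of_mem_lowerSet hb hu hn, hn⟩

lemma notMem_upperSet_of_mem_lowerSet (hb : b ∈ lowerSet X v) : b ∉ upperSet X v := fun hb' => by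
  obtain ⟨u, hu, hn⟩ := exists_unit_isExtNormal (Finset.mem_filter.1 hb).2.1
  exact (inner_pos_of_mem_upperSet hb' hu hn).not_gt (inner_neg_of_mem_lowerSet hb hu hn)

lemma inner_perp_mem_Ioo_of_mem_upperSet (hv : ‖v‖ = 1) (hb : b ∈ upperSet X v) :
    ⟪perp v, b⟫ ∈ Set.Ioo ⟪perp v, lPt v X⟫ ⟪perp v, rPt v X⟫ :=
  inner_perp_mem_Ioo hv ⟨b, mem_of_mem_upperSet hb⟩ (mem_of_mem_upperSet hb)
    fun _ hu h => (inner_pos_of_mem_upperSet hb hu h).ne'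

lemma inner_perp_mem_Ioo_of_mem_lowerSet (hv : ‖v‖ = 1) (hb : b ∈ lowerSet X v) :
    ⟪perp v, b⟫ ∈ Set.Ioo ⟪perp v, lPt v X⟫ ⟪perp v, rPt v X⟫ :=
  inner_perp_mem_Ioo hv ⟨b, mem_of_mem_lowerSet hb⟩ (mem_of_mem_lowerSet hb)
    fun _ hu h => (inner_neg_of_mem_lowerSet hb hu h).ne

/-- Each of the two points lies above the other. -/
lemma eq_of_mem_upperSet_of_inner_perp_eq (hv : ‖v‖ = 1) (hb : b ∈ upperSet X v)
    (hc : c ∈ upperSet X v) (h : ⟪perp v, b⟫ = ⟪perp v, c⟫) : b = c := by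
  obtain ⟨μ, hμ, hμb⟩ := exists_isExtNormal_of_mem_upperSet hb
  obtain ⟨ν, hν, hνc⟩ := exists_isExtNormal_of_mem_upperSet hc
  have hvert : b - c = ⟪v, b - c⟫ • v :=
    eq_inner_smul_of_inner_perp_eq_zero hv (by rw [inner_sub_right, h, sub_self])
  have h₁ := hμb.inner_sub_nonpos (mem_of_mem_upperSet hc)
  have h₂ := hνc.inner_sub_nonpos (mem_of_mem_upperSet hb)
  rw [← neg_sub, hvert, inner_neg_right, real_inner_smul_right] at h₁
  rw [hvert, real_inner_smul_right] at h₂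
  have ht : ⟪v, b - c⟫ = 0 := le_antisymm (nonpos_of_mul_nonpos_left h₂ hν) (by nlinarith)
  rw [← sub_eq_zero, hvert, ht, zero_smul]

end UpperAndLowerPoints

/-- The upper points `b` of `B` for which `a + b` lies on the boundary of `[A + B]`. -/
def upperContacts (A B : Finset Pt) (v a : Pt) : Finset Pt :=
  (upperSet B v).filter (HasCommonNormal A B a)

lemma mem_upperSet_of_mem_upperContacts {A B : Finset Pt} {v a b : Pt}
    (h : b ∈ upperContacts A B v a) : b ∈ upperSet B v :=
  (Finset.mem_filter.1 h).1

lemma mem_of_mem_upperContacts {A B : Finset Pt} {v a b : Pt} (h : b ∈ upperContacts A B v a) :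
    b ∈ B :=
  mem_of_mem_upperSet (mem_upperSet_of_mem_upperContacts h)

def leftTranslates (A B : Finset Pt) (v : Pt) : Finset Pt :=
  (upperSet B v \ upperContacts A B v (lPt v A)).image (lPt v A + ·)

def rightTranslates (A B : Finset Pt) (v : Pt) : Finset Pt :=
  (upperContacts A B v (lPt v A) \ upperContacts A B v (rPt v A)).image (rPt v A + ·)

section Counting

variable {G : Type*} [AddCommGroup G] [DecidableEq G]

lemma card_union_add_card_inter_add_card_inter_image (U L R : Finset G) (hL : L ⊆ U) (a a' : G) :
    ((U \ L).image (a + ·) ∪ (L \ R).image (a' + ·)).card + (L ∩ R).card +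
      ((U \ L).image (a + ·) ∩ (L \ R).image (a' + ·)).card = U.card := by
  rw [add_right_comm, Finset.card_union_add_card_inter,
    Finset.card_image_of_injective _ (add_right_injective a),
    Finset.card_image_of_injective _ (add_right_injective a'),
    add_assoc, Finset.card_sdiff_add_card_inter, Finset.card_sdiff_add_card_eq_card hL]

variable {s s' t t' : Finset G} {a a' z : G}

lemma sub_mem_or_sub_mem_of_mem_union_image
    (h : z ∈ (s \ s').image (a + ·) ∪ (t \ t').image (a' + ·)) : z - a ∈ s ∨ z - a' ∈ t := by
  simp only [Finset.mem_union, Finset.mem_image, Finset.mem_sdiff] at h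
  rcases h with ⟨b, hb, rfl⟩ | ⟨b, hb, rfl⟩
  · exact .inl (by simpa using hb.1)
  · exact .inr (by simpa using hb.1)

lemma sub_mem_and_sub_add_sub_mem_of_mem_inter_image
    (h : z ∈ (s \ s').image (a + ·) ∩ (t \ t').image (a' + ·)) :
    z - a' ∈ t ∧ z - a' + (a' - a) ∈ s := by
  simp only [Finset.mem_inter, Finset.mem_image, Finset.mem_sdiff] at h
  obtain ⟨⟨b, hb, rfl⟩, ⟨c, hc, hcb⟩⟩ := h
  exact ⟨by rw [← hcb]; simpa using hc.1, by convert hb.1 using 1; abel⟩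

end Counting

lemma card_translates (A B : Finset Pt) (v : Pt) :
    (leftTranslates A B v ∪ rightTranslates A B v).card +
      (upperContacts A B v (lPt v A) ∩ upperContacts A B v (rPt v A)).card +
      (leftTranslates A B v ∩ rightTranslates A B v).card = (upperSet B v).card :=
  card_union_add_card_inter_add_card_inter_image _ _ _
    (fun _ hb => mem_upperSet_of_mem_upperContacts hb) _ _

lemma translates_subset_interiorPts {A B : Finset Pt} {v : Pt} (hA : ¬ Collinear ℝ (A : Set Pt))
    (hB : B.Nonempty) : leftTranslates A B v ∪ rightTranslates A B v ⊆ interiorPts (A + B) :=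
  have hint := interior_convexHull_add_nonempty hA hB
  Finset.union_subset
    (image_add_subset_interiorPts hint (lPt_mem (nonempty_of_not_collinear hA))
      (fun _ hb => mem_of_mem_upperSet hb) fun _ hb h => Finset.mem_filter.2 ⟨hb, h⟩)
    (image_add_subset_interiorPts hint (rPt_mem (nonempty_of_not_collinear hA))
      (fun _ hb => mem_of_mem_upperContacts hb)
      fun _ hb h => Finset.mem_filter.2 ⟨mem_upperSet_of_mem_upperContacts hb, h⟩)

lemma inner_ne_zero_of_isExtNormal_lPt_rPt {X Y : Finset Pt} {v u : Pt} (hv : ‖v‖ = 1)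
    (hX : ¬ Collinear ℝ (X : Set Pt)) (hY : ¬ Collinear ℝ (Y : Set Pt)) (hu : u ≠ 0)
    (hl : IsExtNormal X u (lPt v X)) (hr : IsExtNormal Y u (rPt v Y)) : ⟪u, v⟫ ≠ 0 := by
  intro h0
  have hu_eq := eq_inner_perp_smul_perp_of_inner_eq_zero hv (by rwa [real_inner_comm])
  have hX' := hl.inner_sub_nonpos (rPt_mem (v := v) (nonempty_of_not_collinear hX))
  have hY' := hr.inner_sub_nonneg (lPt_mem (v := v) (nonempty_of_not_collinear hY))
  rw [hu_eq, real_inner_smul_left] at hX' hY'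
  have hc : ⟪perp v, u⟫ = 0 := le_antisymm
    (nonpos_of_mul_nonpos_left hX' (inner_perp_rPt_sub_lPt_pos hv hX))
    (nonneg_of_mul_nonneg_left hY' (inner_perp_rPt_sub_lPt_pos hv hY))
  exact hu (by rw [hu_eq, hc, zero_smul])

section FlatBottom

variable {A B : Finset Pt} {v : Pt} (hv : ‖v‖ = 1) (hA : ¬ Collinear ℝ (A : Set Pt))
  (hvA : NotParallelToSide v A) (hlow : lowerSet A v = ∅)
include hv hA hvA hlow

/-- Without lower points, `[A]` lies above the line through `l_{v,A}` and `r_{v,A}`. -/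
lemma eq_lPt_or_eq_rPt_of_isExtNormal {u x : Pt} (hu : ⟪u, v⟫ < 0) (hx : x ∈ A)
    (h : IsExtNormal A u x) : x = lPt v A ∨ x = rPt v A := by
  have hne := nonempty_of_not_collinear hA
  have hxlow : x ∉ lowerSet A v := by simp [hlow]
  obtain ⟨u', hu', hu'x, hu'v⟩ : ∃ u' : Pt, ‖u'‖ = 1 ∧ IsExtNormal A u' x ∧ 0 ≤ ⟪u', v⟫ := by
    simp only [lowerSet, Finset.mem_filter, not_and, not_forall, not_lt, exists_prop] at hxlow
    exact hxlow hx ⟨u, fun h0 => by simp [h0] at hu, h⟩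
  -- a normal at `x` orthogonal to `v`, hence a multiple of `perp v`
  set n := ⟪u', v⟫ • u + (-⟪u, v⟫) • u' with hn_def
  have hn : IsExtNormal A n x := (h.smul hu'v).add (hu'x.smul (by linarith))
  have hn_eq : n = ⟪perp v, n⟫ • perp v := eq_inner_perp_smul_perp_of_inner_eq_zero hv (by
    simp only [hn_def, inner_add_right, real_inner_smul_right, real_inner_comm v]; ring)
  rcases lt_trichotomy ⟪perp v, n⟫ 0 with hc | hc | hc
  · left
    rw [hn_eq, ← neg_smul_neg, isExtNormal_smul_iff (neg_pos.2 hc)] at hn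
    exact eq_lPt_of_isExtNormal hv hvA hne hx hn
  · exfalso
    have hn0 : ⟪u', v⟫ • u = -((-⟪u, v⟫) • u') := by
      rw [eq_neg_iff_add_eq_zero, ← hn_def, hn_eq, hc, zero_smul]
    have h0 : (-⟪u, v⟫) • u' = 0 :=
      eq_zero_of_isExtNormal_of_isExtNormal_neg hA (hu'x.smul (by linarith)) (hn0 ▸ h.smul hu'v)
    rcases smul_eq_zero.1 h0 with h0 | h0
    · linarith
    · simp [h0] at hu'
  · right
    rw [hn_eq, isExtNormal_smul_iff hc] at hn
    exact eq_rPt_of_isExtNormal hv hvA hne hx hn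


lemma inner_rPt_sub_lPt_ne_zero {u : Pt} (hu : 0 < ⟪u, v⟫)
    (h : IsExtNormal A u (lPt v A) ∨ IsExtNormal A u (rPt v A)) :
    ⟪u, rPt v A - lPt v A⟫ ≠ 0 := by
  -- otherwise `u` is normal at both ends of the bottom edge, and so is `-u` at one of them
  intro h0
  have hne := nonempty_of_not_collinear hA
  rw [inner_sub_right, sub_eq_zero] at h0
  have hl : IsExtNormal A u (lPt v A) := h.elim id fun hr y hy => h0 ▸ hr y hy
  have hr : IsExtNormal A u (rPt v A) := h.elim (fun hl y hy => h0 ▸ hl y hy) id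
  obtain ⟨x, hx, hmax⟩ := A.exists_max_image (fun y => ⟪-u, y⟫) hne
  have hu0 : u ≠ 0 := by rintro rfl; simp at hu
  rcases eq_lPt_or_eq_rPt_of_isExtNormal hv hA hvA hlow (by simpa using hu) hx hmax with rfl | rfl
  · exact hu0 (eq_zero_of_isExtNormal_of_isExtNormal_neg hA hl hmax)
  · exact hu0 (eq_zero_of_isExtNormal_of_isExtNormal_neg hA hr hmax)

lemma dirSlope_lt_supportSlope_of_isExtNormal_lPt {u : Pt} (hu : 0 < ⟪u, v⟫)
    (h : IsExtNormal A u (lPt v A)) : dirSlope v (rPt v A - lPt v A) < supportSlope v u := by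
  rw [← not_le, ← inner_nonneg_iff_supportSlope_le hv hu (inner_perp_rPt_sub_lPt_pos hv hA)]
  exact fun h0 => inner_rPt_sub_lPt_ne_zero hv hA hvA hlow hu (.inl h) (le_antisymm
    (h.inner_sub_nonpos (rPt_mem (nonempty_of_not_collinear hA))) h0)

lemma supportSlope_lt_dirSlope_of_isExtNormal_rPt {u : Pt} (hu : 0 < ⟪u, v⟫)
    (h : IsExtNormal A u (rPt v A)) : supportSlope v u < dirSlope v (rPt v A - lPt v A) := by
  rw [← not_le, ← inner_nonpos_iff_dirSlope_le hv hu (inner_perp_rPt_sub_lPt_pos hv hA)]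
  exact fun h0 => inner_rPt_sub_lPt_ne_zero hv hA hvA hlow hu (.inr h) (le_antisymm h0
    (h.inner_sub_nonneg (lPt_mem (nonempty_of_not_collinear hA))))

/-- Upper normals at `l_{v,A}` are steeper than those at `r_{v,A}`, and along `B` the support
slopes of upper normals decrease from left to right. -/
lemma inner_perp_le_of_isExtNormal_lPt_rPt {μ ν b c : Pt} (hμ : 0 < ⟪μ, v⟫) (hν : 0 < ⟪ν, v⟫)
    (hμA : IsExtNormal A μ (lPt v A)) (hνA : IsExtNormal A ν (rPt v A)) (hb : b ∈ B) (hc : c ∈ B)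
    (hμB : IsExtNormal B μ b) (hνB : IsExtNormal B ν c) : ⟪perp v, b⟫ ≤ ⟪perp v, c⟫ := by
  by_contra! hlt
  have := supportSlope_le_supportSlope hv hμ hν (e := b - c) (by rw [inner_sub_right]; linarith)
    (hμB.inner_sub_nonneg hc) (hνB.inner_sub_nonpos hb)
  linarith [dirSlope_lt_supportSlope_of_isExtNormal_lPt hv hA hvA hlow hμ hμA,
    supportSlope_lt_dirSlope_of_isExtNormal_rPt hv hA hvA hlow hν hνA]

/-- As `b - d ∈ B` for `d = r_{v,A} - l_{v,A}`, the upper normal `ν` at `b` is at most as steep as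
`d`, hence less steep than `μ`; compare both with the slope of `c + d - b`. -/
lemma inner_perp_le_of_isExtNormal_of_sub_mem {μ ν b c : Pt} (hμ : 0 < ⟪μ, v⟫)
    (hν : 0 < ⟪ν, v⟫) (hμA : IsExtNormal A μ (lPt v A)) (hμB : IsExtNormal B μ c)
    (hνB : IsExtNormal B ν b) (hbd : b - (rPt v A - lPt v A) ∈ B)
    (hcd : c + (rPt v A - lPt v A) ∈ B) : ⟪perp v, c⟫ ≤ ⟪perp v, b - (rPt v A - lPt v A)⟫ := by
  set d := rPt v A - lPt v A
  by_contra! hlt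
  have hslope := supportSlope_le_supportSlope hv hμ hν (e := c + d - b)
    (by simp only [inner_sub_right, inner_add_right] at hlt ⊢; linarith)
    (by simpa [sub_sub_eq_add_sub] using hμB.inner_sub_nonneg hbd) (hνB.inner_sub_nonpos hcd)
  have hνd : supportSlope v ν ≤ dirSlope v d :=
    (inner_nonneg_iff_supportSlope_le hv hν (inner_perp_rPt_sub_lPt_pos hv hA)).1
      (by simpa using hνB.inner_sub_nonneg hbd)
  linarith [dirSlope_lt_supportSlope_of_isExtNormal_lPt hv hA hvA hlow hμ hμA]


lemma inner_perp_le_of_mem_upperContacts {b c : Pt} (hb : b ∈ upperContacts A B v (lPt v A))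
    (hc : c ∈ upperContacts A B v (rPt v A)) : ⟪perp v, b⟫ ≤ ⟪perp v, c⟫ := by
  obtain ⟨hbU, μ, hμ, hμA, hμB⟩ := Finset.mem_filter.1 hb
  obtain ⟨hcU, ν, hν, hνA, hνB⟩ := Finset.mem_filter.1 hc
  exact inner_perp_le_of_isExtNormal_lPt_rPt hv hA hvA hlow
    (inner_pos_of_mem_upperSet hbU hμ hμB) (inner_pos_of_mem_upperSet hcU hν hνB) hμA hνA
    (mem_of_mem_upperSet hbU) (mem_of_mem_upperSet hcU) hμB hνB

lemma card_inter_upperContacts_le_one :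
    (upperContacts A B v (lPt v A) ∩ upperContacts A B v (rPt v A)).card ≤ 1 :=
  Finset.card_le_one.2 fun b hb c hc => by
    rw [Finset.mem_inter] at hb hc
    exact eq_of_mem_upperSet_of_inner_perp_eq hv (mem_upperSet_of_mem_upperContacts hb.1)
      (mem_upperSet_of_mem_upperContacts hc.1)
      (le_antisymm (inner_perp_le_of_mem_upperContacts hv hA hvA hlow hb.1 hc.2)
        (inner_perp_le_of_mem_upperContacts hv hA hvA hlow hc.1 hb.2))

lemma inner_perp_le_of_add_mem_upperSet {c c' : Pt} (hc : c ∈ upperContacts A B v (lPt v A))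
    (hcd : c + (rPt v A - lPt v A) ∈ B) (hc' : c' ∈ B)
    (hc'd : c' + (rPt v A - lPt v A) ∈ upperSet B v) : ⟪perp v, c⟫ ≤ ⟪perp v, c'⟫ := by
  obtain ⟨hcU, μ, hμ, hμA, hμB⟩ := Finset.mem_filter.1 hc
  obtain ⟨ν, hν, hνB⟩ := exists_isExtNormal_of_mem_upperSet hc'd
  simpa using inner_perp_le_of_isExtNormal_of_sub_mem hv hA hvA hlow
    (inner_pos_of_mem_upperSet hcU hμ hμB) hν hμA hμB hνB (by simpa using hc') hcd

lemma eq_of_add_mem_upperSet {c c' : Pt} (hc : c ∈ upperContacts A B v (lPt v A))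
    (hcd : c + (rPt v A - lPt v A) ∈ upperSet B v) (hc' : c' ∈ upperContacts A B v (lPt v A))
    (hc'd : c' + (rPt v A - lPt v A) ∈ upperSet B v) : c = c' :=
  eq_of_mem_upperSet_of_inner_perp_eq hv (mem_upperSet_of_mem_upperContacts hc)
    (mem_upperSet_of_mem_upperContacts hc') (le_antisymm
      (inner_perp_le_of_add_mem_upperSet hv hA hvA hlow hc (mem_of_mem_upperSet hcd)
        (mem_of_mem_upperContacts hc') hc'd)
      (inner_perp_le_of_add_mem_upperSet hv hA hvA hlow hc' (mem_of_mem_upperSet hc'd)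
        (mem_of_mem_upperContacts hc) hcd))

lemma card_inter_translates_le_one : (leftTranslates A B v ∩ rightTranslates A B v).card ≤ 1 := by
  refine Finset.card_le_one.2 fun z hz z' hz' => ?_
  obtain ⟨hc, hcd⟩ := sub_mem_and_sub_add_sub_mem_of_mem_inter_image hz
  obtain ⟨hc', hc'd⟩ := sub_mem_and_sub_add_sub_mem_of_mem_inter_image hz'
  simpa using eq_of_add_mem_upperSet hv hA hvA hlow hc hcd hc' hc'd

lemma exists_isExtNormal_lPt_rPt_of_inner_neg (hB : ¬ Collinear ℝ (B : Set Pt))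
    (hcover : interiorPts (A + B) ⊆ leftTranslates A B v ∪ rightTranslates A B v)
    {c bs : Pt} (hc : c ∈ upperContacts A B v (lPt v A))
    (hcd : c + (rPt v A - lPt v A) ∈ upperSet B v) (hbs : bs ∈ upperContacts A B v (rPt v A)) :
    ∃ u : Pt, ⟪u, v⟫ < 0 ∧ IsExtNormal A u (lPt v A) ∧ IsExtNormal B u (rPt v B) := by
  have hAne := nonempty_of_not_collinear hA
  have hrB := rPt_mem (v := v) (nonempty_of_not_collinear hB)
  obtain ⟨u, hu, huA, huB⟩ : HasCommonNormal A B (lPt v A) (rPt v B) := by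
    refine hasCommonNormal_of_add_notMem_interior
      (interior_convexHull_add_nonempty hA ⟨_, hrB⟩) (lPt_mem hAne) hrB fun hi => ?_
    rcases sub_mem_or_sub_mem_of_mem_union_image
      (hcover (Finset.mem_filter.2 ⟨Finset.add_mem_add (lPt_mem hAne) hrB, hi⟩)) with h | h
    · exact lt_irrefl _ (inner_perp_mem_Ioo_of_mem_upperSet hv (by simpa using h)).2
    · have hle := inner_perp_le_of_add_mem_upperSet hv hA hvA hlow
        (c := rPt v B - (rPt v A - lPt v A)) (by convert h using 1; abel) (by simpa using hrB)
        (mem_of_mem_upperContacts hc) hcd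
      have hlt := (inner_perp_mem_Ioo_of_mem_upperSet hv hcd).2
      simp only [inner_sub_right, inner_add_right] at hle hlt
      linarith
  refine ⟨u, ?_, huA, huB⟩
  rcases lt_trichotomy ⟪u, v⟫ 0 with h | h | h
  · exact h
  · exact absurd h
      (inner_ne_zero_of_isExtNormal_lPt_rPt hv hA hB (by rintro rfl; simp at hu) huA huB)
  · obtain ⟨hbsU, ν, hν, hνA, hνB⟩ := Finset.mem_filter.1 hbs
    have := inner_perp_le_of_isExtNormal_lPt_rPt hv hA hvA hlow h
      (inner_pos_of_mem_upperSet hbsU hν hνB) huA hνA hrB (mem_of_mem_upperSet hbsU) huB hνB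
    linarith [(inner_perp_mem_Ioo_of_mem_upperSet hv hbsU).2]

lemma exists_isExtNormal_rPt_lPt_of_inner_neg (hB : ¬ Collinear ℝ (B : Set Pt))
    (hcover : interiorPts (A + B) ⊆ leftTranslates A B v ∪ rightTranslates A B v)
    {c : Pt} (hc : c ∈ upperContacts A B v (lPt v A)) (hcd : c + (rPt v A - lPt v A) ∈ B) :
    ∃ u : Pt, ⟪u, v⟫ < 0 ∧ IsExtNormal A u (rPt v A) ∧ IsExtNormal B u (lPt v B) := by
  have hAne := nonempty_of_not_collinear hA
  have hlB := lPt_mem (v := v) (nonempty_of_not_collinear hB)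
  obtain ⟨hcU, μ, hμ, hμA, hμB⟩ := Finset.mem_filter.1 hc
  have hlc := (inner_perp_mem_Ioo_of_mem_upperSet hv hcU).1
  obtain ⟨u, hu, huA, huB⟩ : HasCommonNormal A B (rPt v A) (lPt v B) := by
    refine hasCommonNormal_of_add_notMem_interior
      (interior_convexHull_add_nonempty hA ⟨_, hlB⟩) (rPt_mem hAne) hlB fun hi => ?_
    rcases sub_mem_or_sub_mem_of_mem_union_image
      (hcover (Finset.mem_filter.2 ⟨Finset.add_mem_add (rPt_mem hAne) hlB, hi⟩)) with h | h
    · have := inner_perp_le_of_add_mem_upperSet hv hA hvA hlow hc hcd hlB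
        (by convert h using 1; abel)
      linarith
    · exact lt_irrefl _ (inner_perp_mem_Ioo_of_mem_upperSet hv
        (mem_upperSet_of_mem_upperContacts (by simpa using h))).1
  refine ⟨u, ?_, huA, huB⟩
  rcases lt_trichotomy ⟪u, v⟫ 0 with h | h | h
  · exact h
  · exact absurd h
      (inner_ne_zero_of_isExtNormal_lPt_rPt hv hB hA (by rintro rfl; simp at hu) huB huA)
  · have := inner_perp_le_of_isExtNormal_lPt_rPt hv hA hvA hlow
      (inner_pos_of_mem_upperSet hcU hμ hμB) h hμA huA (mem_of_mem_upperSet hcU) hlB hμB huB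
    linarith

end FlatBottom

lemma dirSlope_eq_supportSlope_of_isExtNormal {A B : Finset Pt} {v u u' : Pt} (hv : ‖v‖ = 1)
    (hA : ¬ Collinear ℝ (A : Set Pt)) (hB : ¬ Collinear ℝ (B : Set Pt)) (hu : ⟪u, v⟫ < 0)
    (hu' : ⟪u', v⟫ < 0) (huA : IsExtNormal A u (lPt v A)) (huB : IsExtNormal B u (rPt v B))
    (hu'A : IsExtNormal A u' (rPt v A)) (hu'B : IsExtNormal B u' (lPt v B)) :
    dirSlope v (rPt v A - lPt v A) = supportSlope v u ∧
      dirSlope v (rPt v B - lPt v B) = supportSlope v u := by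
  have hAne := nonempty_of_not_collinear hA
  have hBne := nonempty_of_not_collinear hB
  have hd := inner_perp_rPt_sub_lPt_pos hv hA
  have hD := inner_perp_rPt_sub_lPt_pos hv hB
  have h₁ := (inner_nonpos_iff_supportSlope_le_of_neg hv hu hd).1
    (huA.inner_sub_nonpos (rPt_mem hAne))
  have h₂ := (inner_nonneg_iff_dirSlope_le_of_neg hv hu hD).1
    (huB.inner_sub_nonneg (lPt_mem hBne))
  have h₃ := (inner_nonneg_iff_dirSlope_le_of_neg hv hu' hd).1
    (hu'A.inner_sub_nonneg (lPt_mem hAne))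
  have h₄ := (inner_nonpos_iff_supportSlope_le_of_neg hv hu' hD).1
    (hu'B.inner_sub_nonpos (rPt_mem hBne))
  constructor <;> linarith

section LowerPoints

variable {A B : Finset Pt} {v x : Pt} (hv : ‖v‖ = 1) (hA : ¬ Collinear ℝ (A : Set Pt))
  (hx : x ∈ lowerSet B v)
include hv hA hx

lemma dirSlope_sub_lPt_le_of_hasCommonNormal (h : HasCommonNormal A B (lPt v A) x) :
    dirSlope v (x - lPt v B) ≤ dirSlope v (rPt v A - lPt v A) := by
  obtain ⟨u, hu, huA, hux⟩ := h
  have hu' := inner_neg_of_mem_lowerSet hx hu hux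
  have hlx : 0 < ⟪perp v, x - lPt v B⟫ := by
    rw [inner_sub_right, sub_pos]; exact (inner_perp_mem_Ioo_of_mem_lowerSet hv hx).1
  calc dirSlope v (x - lPt v B) ≤ supportSlope v u :=
        (inner_nonneg_iff_dirSlope_le_of_neg hv hu' hlx).1
          (hux.inner_sub_nonneg (lPt_mem ⟨x, mem_of_mem_lowerSet hx⟩))
    _ ≤ dirSlope v (rPt v A - lPt v A) :=
        (inner_nonpos_iff_supportSlope_le_of_neg hv hu' (inner_perp_rPt_sub_lPt_pos hv hA)).1
          (huA.inner_sub_nonpos (rPt_mem (nonempty_of_not_collinear hA)))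

lemma dirSlope_le_dirSlope_rPt_sub_of_sub_mem (h : x - (rPt v A - lPt v A) ∈ B) :
    dirSlope v (rPt v A - lPt v A) ≤ dirSlope v (rPt v B - x) := by
  obtain ⟨ξ, hξ, hξx⟩ := exists_isExtNormal_of_mem_lowerSet hx
  have hxr : 0 < ⟪perp v, rPt v B - x⟫ := by
    rw [inner_sub_right, sub_pos]; exact (inner_perp_mem_Ioo_of_mem_lowerSet hv hx).2
  calc dirSlope v (rPt v A - lPt v A) ≤ supportSlope v ξ :=
        (inner_nonneg_iff_dirSlope_le_of_neg hv hξ (inner_perp_rPt_sub_lPt_pos hv hA)).1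
          (by simpa using hξx.inner_sub_nonneg h)
    _ ≤ dirSlope v (rPt v B - x) := (inner_nonpos_iff_supportSlope_le_of_neg hv hξ hxr).1
        (hξx.inner_sub_nonpos (rPt_mem ⟨x, mem_of_mem_lowerSet hx⟩))

end LowerPoints

lemma sub_mem_of_not_hasCommonNormal {A B : Finset Pt} {v x : Pt}
    (hA : ¬ Collinear ℝ (A : Set Pt))
    (hcover : interiorPts (A + B) ⊆ leftTranslates A B v ∪ rightTranslates A B v)
    (hx : x ∈ lowerSet B v) (h : ¬ HasCommonNormal A B (lPt v A) x) :
    x - (rPt v A - lPt v A) ∈ B := by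
  have hlA := lPt_mem (v := v) (nonempty_of_not_collinear hA)
  have hxB := mem_of_mem_lowerSet hx
  have hi : lPt v A + x ∈ interiorPts (A + B) := by
    refine Finset.mem_filter.2 ⟨Finset.add_mem_add hlA hxB, ?_⟩
    by_contra hi
    exact h (hasCommonNormal_of_add_notMem_interior
      (interior_convexHull_add_nonempty hA ⟨x, hxB⟩) hlA hxB hi)
  rcases sub_mem_or_sub_mem_of_mem_union_image (hcover hi) with hU | hL
  · exact absurd (by simpa using hU) (notMem_upperSet_of_mem_lowerSet hx)
  · convert mem_of_mem_upperContacts hL using 1; abel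

lemma lowerSet_subset_segment {A B : Finset Pt} {v u : Pt} (hv : ‖v‖ = 1)
    (hA : ¬ Collinear ℝ (A : Set Pt)) (hB : ¬ Collinear ℝ (B : Set Pt))
    (hcover : interiorPts (A + B) ⊆ leftTranslates A B v ∪ rightTranslates A B v)
    (hu : ⟪u, v⟫ < 0) (hrB : IsExtNormal B u (rPt v B))
    (hd : dirSlope v (rPt v A - lPt v A) = supportSlope v u)
    (hD : dirSlope v (rPt v B - lPt v B) = supportSlope v u) :
    (lowerSet B v : Set Pt) ⊆ segment ℝ (lPt v B) (rPt v B) := by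
  intro x hx
  rw [Finset.mem_coe] at hx
  have hxB := mem_of_mem_lowerSet hx
  obtain ⟨hlx, hxr⟩ := inner_perp_mem_Ioo_of_mem_lowerSet hv hx
  have hDpos := inner_perp_rPt_sub_lPt_pos hv hB
  have hlpos : 0 < ⟪perp v, x - lPt v B⟫ := by rw [inner_sub_right]; linarith
  have hrpos : 0 < ⟪perp v, rPt v B - x⟫ := by rw [inner_sub_right]; linarith
  have huD : ⟪u, rPt v B - lPt v B⟫ = 0 := (inner_eq_zero_iff_dirSlope_eq hv hu.ne hDpos.ne').2 hD
  have hlB : IsExtNormal B u (lPt v B) := fun y hy => by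
    rw [inner_sub_right, sub_eq_zero] at huD
    exact huD ▸ hrB y hy
  have hx_slope : dirSlope v (x - lPt v B) = supportSlope v u := by
    by_cases hcn : HasCommonNormal A B (lPt v A) x
    · exact le_antisymm (hd ▸ dirSlope_sub_lPt_le_of_hasCommonNormal hv hA hx hcn)
        ((inner_nonpos_iff_supportSlope_le_of_neg hv hu hlpos).1 (hlB.inner_sub_nonpos hxB))
    · have hrx : ⟪u, rPt v B - x⟫ = 0 := by
        refine (inner_eq_zero_iff_dirSlope_eq hv hu.ne hrpos.ne').2 (le_antisymm
          ((inner_nonneg_iff_dirSlope_le_of_neg hv hu hrpos).1 (hrB.inner_sub_nonneg hxB)) ?_)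
        exact hd ▸ dirSlope_le_dirSlope_rPt_sub_of_sub_mem hv hA hx
          (sub_mem_of_not_hasCommonNormal hA hcover hx hcn)
      rw [← inner_eq_zero_iff_dirSlope_eq hv hu.ne hlpos.ne',
        show x - lPt v B = (rPt v B - lPt v B) - (rPt v B - x) by abel, inner_sub_right, huD, hrx,
        sub_zero]
  have hx_eq := eq_smul_of_dirSlope_eq hv hlpos.ne' hDpos.ne' (hx_slope.trans hD.symm)
  rw [segment_eq_image']
  refine ⟨_, ⟨div_nonneg hlpos.le hDpos.le, (div_le_one hDpos).2 ?_⟩, by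
    simp only [← hx_eq, add_sub_cancel]⟩
  simp only [inner_sub_right]
  linarith

theorem upperlower_segment_general
    (A B : Finset Pt) (hA : ¬ Collinear ℝ (A : Set Pt)) (hB : ¬ Collinear ℝ (B : Set Pt))
    (v : Pt) (hv : ‖v‖ = 1)
    (hvA : NotParallelToSide v A)
    (hlow : lowerSet A v = ∅) :
    (intCard (A + B) : ℤ) ≥ ((upperSet B v).card : ℤ) - 2 ∧
      ((intCard (A + B) : ℤ) = ((upperSet B v).card : ℤ) - 2 →
        ((lowerSet B v : Set Pt) ⊆ segment ℝ (lPt v B) (rPt v B)) ∧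
          ((∃ c : ℝ, rPt v A - lPt v A = c • (rPt v B - lPt v B)) ∨
            (∃ c : ℝ, rPt v B - lPt v B = c • (rPt v A - lPt v A)))) := by
  have hsub := translates_subset_interiorPts (v := v) hA (nonempty_of_not_collinear hB)
  have hcount := card_translates A B v
  have hLR := card_inter_upperContacts_le_one (B := B) hv hA hvA hlow
  have hcoll := card_inter_translates_le_one (B := B) hv hA hvA hlow
  have hle := Finset.card_le_card hsub
  rw [intCard_eq_card_interiorPts]
  refine ⟨by omega, fun heq => ?_⟩
  obtain ⟨bs, hbs⟩ := Finset.card_pos.1 (by omega : 0 < (upperContacts A B v (lPt v A) ∩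
    upperContacts A B v (rPt v A)).card)
  obtain ⟨z, hz⟩ := Finset.card_pos.1 (by omega : 0 < (leftTranslates A B v ∩
    rightTranslates A B v).card)
  obtain ⟨hc, hcd⟩ := sub_mem_and_sub_add_sub_mem_of_mem_inter_image hz
  have hcover := (Finset.eq_of_subset_of_card_le hsub (by omega)).symm.subset
  obtain ⟨u, hu, huA, huB⟩ :=
    exists_isExtNormal_lPt_rPt_of_inner_neg hv hA hvA hlow hB hcover hc hcd
      (Finset.mem_inter.1 hbs).2
  obtain ⟨u', hu', hu'A, hu'B⟩ :=
    exists_isExtNormal_rPt_lPt_of_inner_neg hv hA hvA hlow hB hcover hc (mem_of_mem_upperSet hcd)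
  obtain ⟨hd, hD⟩ := dirSlope_eq_supportSlope_of_isExtNormal hv hA hB hu hu' huA huB hu'A hu'B
  exact ⟨lowerSet_subset_segment hv hA hB hcover hu huB hd hD,
    .inr ⟨_, eq_smul_of_dirSlope_eq hv (inner_perp_rPt_sub_lPt_pos hv hB).ne'
      (inner_perp_rPt_sub_lPt_pos hv hA).ne' (hD.trans hd.symm)⟩⟩

theorem upperlower_segment
    (A B : Finset Pt) (hA : ¬ Collinear ℝ (A : Set Pt)) (hB : ¬ Collinear ℝ (B : Set Pt))
    (v : Pt) (hv : ‖v‖ = 1)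
    (hvA : NotParallelToSide v A) (hvB : NotParallelToSide v B)
    (hlow : lowerSet A v = ∅) :
    (intCard (A + B) : ℤ) ≥ ((upperSet B v).card : ℤ) - 2 ∧
      ((intCard (A + B) : ℤ) = ((upperSet B v).card : ℤ) - 2 →
        ((lowerSet B v : Set Pt) ⊆ segment ℝ (lPt v B) (rPt v B)) ∧
          ((∃ c : ℝ, rPt v A - lPt v A = c • (rPt v B - lPt v B)) ∨
            (∃ c : ℝ, rPt v B - lPt v B = c • (rPt v A - lPt v A)))) :=
  upperlower_segment_general A B hA hB v hv hvA hlow
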